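/- For every k ∈ ℕ and reals ε, δ > 0 with ε ≤ 1, there exists n ∈ ℕ such that for every finite set I with |I| > n there is a partition 2^I = a⁰ ∪ a¹ such that: (1) for every nonempty X ⊆ 2^I with |X| ≤ k, | |⋂_{x∈X}(a⁰+x)|/2^{|I|} − 2^{-|X|} | < δ; and (2) for every U ⊆ 2^I with |U|/2^{|I|} = a ≥ ε, there is a set T ⊆ 2^I with |T|/2^{|I|} > 1 − δ such that for every s ∈ T, | |(a⁰+s) ∩ U|/2^{|I|} − a/2 | < δ. -/

import Mathlib

open scoped Classical

/-!
The argument works in any finite abelian group `G` (here `G = 2^I`). Colour `G` by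
`h : G → ZMod 2` and put `a⁰ = h⁻¹(0)`, so that `a⁰ + x = {t | h (t - x) = 0}`. Both conditions
follow once every correlation `∑ t, ∏ x ∈ S, (-1) ^ h (t - x)` with `S ≠ ∅`, `|S| ≤ max k 2` is
`o(|G|)`: for (1) expand the indicator of `⋂ x ∈ X, (a⁰ + x)` as
`∏ x ∈ X, (1 + (-1) ^ h (t - x)) / 2`; for (2) the second moment over `s` of the bias of the
section `(a⁰ + s) ∩ U` only involves the correlations of pairs `{0, d}`, and Chebyshev applies.

A uniformly random colouring has this property. The `2q`-th moment of a correlation counts the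
`2q`-tuples `p` whose translates `p i - S` cover every point an even number of times; then every
entry lies in `S - S` of another entry, and there are only `O(|G| ^ q)` such tuples. Markov's
inequality with `q = K + 1` beats the union bound over the `O(|G| ^ K)` sets `S`.
-/

open Finset
open scoped Pointwise

universe u

namespace PseudorandomColoring

noncomputable def sgn (b : ZMod 2) : ℝ := if b = 0 then 1 else -1

lemma sgn_mul_self (b : ZMod 2) : sgn b * sgn b = 1 := by
  unfold sgn; split_ifs <;> norm_num

lemma ite_eq_zero_eq_half (b : ZMod 2) : (if b = 0 then (1 : ℝ) else 0) = (1 + sgn b) / 2 := by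
  unfold sgn; split_ifs <;> norm_num

lemma sum_sgn_pow (c : ℕ) : ∑ b : ZMod 2, sgn b ^ c = 1 + (-1) ^ c := by
  rw [show (univ : Finset (ZMod 2)) = {0, 1} from rfl, sum_pair (by decide)]
  simp [sgn]

section Correlation

variable {G : Type*} [AddCommGroup G] [Fintype G]

noncomputable def corr (h : G → ZMod 2) (S : Finset G) : ℝ :=
  ∑ t, ∏ x ∈ S, sgn (h (t - x))

lemma prod_sub_eq_prod_ite {M : Type*} [CommMonoid M] (f : G → M) (S : Finset G) (c : G) :
    ∏ x ∈ S, f (c - x) = ∏ v, if c - v ∈ S then f v else 1 := by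
  rw [← Fintype.prod_ite_mem]
  exact Fintype.prod_equiv (Equiv.subLeft c) _ _ (by simp)

lemma prod_one_add_neg_one_pow {ι : Type*} [Fintype ι] (c : ι → ℕ) :
    ∏ v, (1 + (-1 : ℝ) ^ c v) = if ∀ v, Even (c v) then 2 ^ Fintype.card ι else 0 := by
  split_ifs with hc
  · rw [← card_univ, ← prod_const]
    exact prod_congr rfl fun v _ => by rw [(hc v).neg_one_pow]; norm_num
  · obtain ⟨v, hv⟩ := not_forall.1 hc
    exact prod_eq_zero (mem_univ v) (by rw [(Nat.not_even_iff_odd.1 hv).neg_one_pow]; norm_num)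

lemma corr_pow_eq_sum (h : G → ZMod 2) (S : Finset G) (n : ℕ) :
    corr h S ^ n = ∑ p : Fin n → G, ∏ v, sgn (h v) ^ #{i | p i - v ∈ S} := by
  rw [corr, Fintype.sum_pow]
  refine sum_congr rfl fun p _ => ?_
  simp_rw [prod_sub_eq_prod_ite (fun v => sgn (h v))]
  rw [prod_comm]
  refine prod_congr rfl fun v _ => ?_
  rw [← prod_filter, prod_const]

theorem sum_corr_pow (S : Finset G) (n : ℕ) :
    ∑ h : G → ZMod 2, corr h S ^ n =
      #{p : Fin n → G | ∀ v, Even #{i | p i - v ∈ S}} * 2 ^ Fintype.card G := by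
  simp_rw [corr_pow_eq_sum]
  rw [sum_comm]
  have := fun p : Fin n → G => Fintype.prod_sum fun v b => sgn b ^ #{i | p i - v ∈ S}
  simp_rw [← this, sum_sgn_pow, prod_one_add_neg_one_pow]
  rw [← sum_filter, sum_const, nsmul_eq_mul]

end Correlation

lemma card_filter_mul_pow_le_sum_pow {ι : Type*} (s : Finset ι) (f : ι → ℝ) {c : ℝ}
    (hc : 0 ≤ c) (m : ℕ) :
    #{x ∈ s | c ≤ |f x|} * c ^ (2 * m) ≤ ∑ x ∈ s, f x ^ (2 * m) := by
  calc #{x ∈ s | c ≤ |f x|} * c ^ (2 * m) = ∑ x ∈ s with c ≤ |f x|, c ^ (2 * m) := by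
        rw [sum_const, nsmul_eq_mul]
    _ ≤ ∑ x ∈ s with c ≤ |f x|, f x ^ (2 * m) := sum_le_sum fun x hx => by
        rw [← pow_abs_two_mul (f x)]
        exact pow_le_pow_left₀ hc (mem_filter.1 hx).2 _
    _ ≤ ∑ x ∈ s, f x ^ (2 * m) := sum_le_sum_of_subset_of_nonneg (filter_subset _ _)
        fun x _ _ => (even_two_mul m).pow_nonneg _

lemma card_filter_card_le {α : Type*} [Fintype α] [Nonempty α] (K : ℕ) :
    #{S : Finset α | #S ≤ K} ≤ (K + 1) * Fintype.card α ^ K := by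
  have hsub : ({S : Finset α | #S ≤ K} : Finset _) ⊆
      (range (K + 1)).biUnion fun r => powersetCard r univ := fun S hS => by
    simpa [Nat.lt_succ_iff] using hS
  calc _ ≤ ∑ r ∈ range (K + 1), #(powersetCard r (univ : Finset α)) :=
        (card_le_card hsub).trans card_biUnion_le
    _ ≤ ∑ _r ∈ range (K + 1), Fintype.card α ^ K := sum_le_sum fun r hr => by
        rw [card_powersetCard, card_univ]
        exact (Nat.choose_le_pow _ _).trans
          (Nat.pow_le_pow_right Fintype.card_pos (Nat.lt_succ_iff.1 (mem_range.1 hr)))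
    _ = _ := by rw [sum_const, card_range, smul_eq_mul]

section LinkedTuples

variable {G : Type*} [AddCommGroup G] (D : Finset G) {n : ℕ}

/-- A tuple is determined by its fresh indices, its fresh entries and, for every other index `i`,
an earlier index `j` together with `p i - p j ∈ D - D`. If every entry has a `D`-neighbour, at most
half of the indices are fresh. -/
noncomputable def freshIndices (p : Fin n → G) : Finset (Fin n) :=
  {i | ∀ j < i, p i - p j ∉ D - D}

lemma sub_notMem_of_mem_freshIndices {p : Fin n → G} {a b : Fin n}
    (ha : a ∈ freshIndices D p) (hb : b ∈ freshIndices D p) (hab : a ≠ b) :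
    p a - p b ∉ D - D := by
  rcases hab.lt_or_gt with h | h
  · intro hmem
    refine (mem_filter.1 hb).2 a h ?_
    obtain ⟨x, hx, y, hy, hxy⟩ := mem_sub.1 hmem
    rw [← neg_sub (p a), ← hxy, neg_sub]
    exact sub_mem_sub hy hx
  · exact (mem_filter.1 ha).2 b h

lemma two_mul_card_freshIndices_le (h0 : 0 ∈ D) {p : Fin n → G}
    (hp : ∀ i, ∃ j ≠ i, p i - p j ∈ D) : 2 * #(freshIndices D p) ≤ n := by
  choose π hπ_ne hπ using hp
  have hmaps : ∀ i ∈ freshIndices D p, π i ∈ (freshIndices D p)ᶜ := by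
    intro i hi
    rw [mem_compl]
    intro hπi
    exact sub_notMem_of_mem_freshIndices D hi hπi (hπ_ne i).symm
      (by simpa using sub_mem_sub (hπ i) h0)
  have hinj : Set.InjOn π (freshIndices D p) := by
    intro a ha b hb hab
    by_contra hne
    refine sub_notMem_of_mem_freshIndices D ha hb hne ?_
    have := sub_mem_sub (hπ a) (hπ b)
    rwa [hab, sub_sub_sub_cancel_right] at this
  have := card_le_card_of_injOn π (fun i hi => hmaps i hi) hinj
  rw [card_compl, Fintype.card_fin] at this
  omega

noncomputable def freshParent (p : Fin n → G) (i : Fin n) : Fin n :=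
  if h : ∃ j < i, p i - p j ∈ D - D then h.choose else i

lemma freshParent_spec {p : Fin n → G} {i : Fin n} (hi : i ∉ freshIndices D p) :
    freshParent D p i < i ∧ p i - p (freshParent D p i) ∈ D - D := by
  have h : ∃ j < i, p i - p j ∈ D - D := by simpa [freshIndices] using hi
  rw [freshParent, dif_pos h]
  exact h.choose_spec

noncomputable def freshCode (p : Fin n → G) (i : Fin n) : G :=
  if i ∈ freshIndices D p then p i else p i - p (freshParent D p i)

lemma eq_of_freshCode_eq {p p' : Fin n → G} (hA : freshIndices D p = freshIndices D p')
    (hπ : freshParent D p = freshParent D p') (hc : freshCode D p = freshCode D p') :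
    p = p' := by
  funext i
  induction i using WellFoundedLT.induction with
  | _ i ih =>
    have hci := congrFun hc i
    by_cases hi : i ∈ freshIndices D p
    · simpa [freshCode, hi, ← hA] using hci
    · have hparent := ih _ (freshParent_spec D hi).1
      simp only [freshCode, hi, ← hA, if_false, ← hπ, hparent] at hci
      exact sub_left_inj.1 hci

lemma prod_card_ite_le {α : Type*} [Fintype α] [Nonempty α] {A : Finset (Fin n)}
    (hA : 2 * #A ≤ n) {W : Finset α} (hW : W.Nonempty) :
    ∏ i, #(if i ∈ A then univ else W) ≤ Fintype.card α ^ (n / 2) * #W ^ n := by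
  simp_rw [apply_ite card]
  rw [prod_ite, prod_const, prod_const, filter_univ_mem, card_univ]
  exact Nat.mul_le_mul (Nat.pow_le_pow_right Fintype.card_pos (by omega))
    (Nat.pow_le_pow_right hW.card_pos ((card_filter_le _ _).trans (by simp)))

theorem card_linkedTuples_le [Fintype G] (h0 : 0 ∈ D) :
    #{p : Fin n → G | ∀ i, ∃ j ≠ i, p i - p j ∈ D} ≤
      2 ^ n * Fintype.card G ^ (n / 2) * #(D - D) ^ n * n ^ n := by
  set small := ({A : Finset (Fin n) | 2 * #A ≤ n} : Finset _)
  set codes := small.sigma fun A =>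
    (Fintype.piFinset fun i => if i ∈ A then univ else D - D) ×ˢ (univ : Finset (Fin n → Fin n))
  set L := ({p : Fin n → G | ∀ i, ∃ j ≠ i, p i - p j ∈ D} : Finset _)
  have hmaps : Set.MapsTo (fun p => (⟨freshIndices D p, freshCode D p, freshParent D p⟩ :
      (_ : Finset (Fin n)) × (Fin n → G) × (Fin n → Fin n)))
      L codes := by
    intro p hp
    rw [mem_coe, mem_filter] at hp
    rw [mem_coe]
    simp only [codes, small, mem_sigma, mem_filter, mem_univ, true_and, mem_product, and_true,
      Fintype.mem_piFinset]
    refine ⟨two_mul_card_freshIndices_le D h0 hp.2, fun i => ?_⟩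
    by_cases hi : i ∈ freshIndices D p
    · simp [hi]
    · simpa [hi, freshCode] using (freshParent_spec D hi).2
  have hinj : Set.InjOn (fun p => (⟨freshIndices D p, freshCode D p, freshParent D p⟩ :
      (_ : Finset (Fin n)) × (Fin n → G) × (Fin n → Fin n))) L := by
    intro p _ p' _ h
    simp only [Sigma.mk.inj_iff, heq_eq_eq, Prod.mk.injEq] at h
    exact eq_of_freshCode_eq D h.1 h.2.2 h.2.1
  calc #L ≤ #codes := card_le_card_of_injOn _ hmaps hinj
    _ = ∑ A ∈ small, (∏ i, #(if i ∈ A then univ else D - D)) * n ^ n := by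
      simp [codes, card_sigma, card_product, Fintype.card_piFinset]
    _ ≤ ∑ _A ∈ small, Fintype.card G ^ (n / 2) * #(D - D) ^ n * n ^ n :=
      sum_le_sum fun A hA => Nat.mul_le_mul_right _
        (prod_card_ite_le (mem_filter.1 hA).2 ⟨0, by simpa using sub_mem_sub h0 h0⟩)
    _ ≤ 2 ^ n * (Fintype.card G ^ (n / 2) * #(D - D) ^ n * n ^ n) := by
      rw [sum_const, smul_eq_mul]
      exact Nat.mul_le_mul_right _ ((card_filter_le _ _).trans (by simp))
    _ = _ := by ring

lemma exists_ne_sub_mem_sub_of_even {S : Finset G} {x₀ : G} (hx₀ : x₀ ∈ S) {p : Fin n → G}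
    (hp : ∀ v, Even #{i | p i - v ∈ S}) (i : Fin n) :
    ∃ j ≠ i, p i - p j ∈ S - S := by
  have hi : i ∈ ({j | p j - (p i - x₀) ∈ S} : Finset _) := by simpa using hx₀
  have hcard : 1 < #{j | p j - (p i - x₀) ∈ S} := by
    obtain ⟨m, hm⟩ := hp (p i - x₀)
    have := card_pos.2 ⟨i, hi⟩
    omega
  obtain ⟨j, hj, hji⟩ := exists_mem_ne hcard i
  refine ⟨j, hji, ?_⟩
  convert sub_mem_sub hx₀ (mem_filter.1 hj).2 using 1
  abel

end LinkedTuples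

section Moments

variable {G : Type*} [AddCommGroup G] [Fintype G]

def momentBound (K q : ℕ) : ℕ :=
  2 ^ (2 * q) * K ^ (8 * q) * (2 * q) ^ (2 * q)

lemma card_filter_even_le {S : Finset G} (hS : S.Nonempty) (q : ℕ) :
    #{p : Fin (2 * q) → G | ∀ v, Even #{i | p i - v ∈ S}} ≤
      momentBound #S q * Fintype.card G ^ q := by
  obtain ⟨x₀, hx₀⟩ := hS
  have hW : #((S - S) - (S - S)) ≤ #S ^ 4 :=
    card_sub_le.trans <| (Nat.mul_le_mul card_sub_le card_sub_le).trans_eq (by ring)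
  calc #{p : Fin (2 * q) → G | ∀ v, Even #{i | p i - v ∈ S}}
      ≤ #{p : Fin (2 * q) → G | ∀ i, ∃ j ≠ i, p i - p j ∈ S - S} :=
        card_le_card <| monotone_filter_right _ fun _ _ hp => exists_ne_sub_mem_sub_of_even hx₀ hp
    _ ≤ 2 ^ (2 * q) * Fintype.card G ^ (2 * q / 2) * #((S - S) - (S - S)) ^ (2 * q) *
          (2 * q) ^ (2 * q) :=
        card_linkedTuples_le _ (by simpa using sub_mem_sub hx₀ hx₀)
    _ ≤ 2 ^ (2 * q) * Fintype.card G ^ q * (#S ^ 4) ^ (2 * q) * (2 * q) ^ (2 * q) := by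
      rw [Nat.mul_div_cancel_left q two_pos]
      gcongr
    _ = momentBound #S q * Fintype.card G ^ q := by
      rw [momentBound]
      ring

theorem sum_corr_pow_le {S : Finset G} (hS : S.Nonempty) (q : ℕ) :
    ∑ h : G → ZMod 2, corr h S ^ (2 * q) ≤
      momentBound #S q * Fintype.card G ^ q * 2 ^ Fintype.card G := by
  rw [sum_corr_pow]
  gcongr
  exact_mod_cast card_filter_even_le hS q

lemma card_filter_le_abs_corr_mul_pow_le {S : Finset G} (hS : S.Nonempty) {K : ℕ} (hSK : #S ≤ K)
    (q : ℕ) {c : ℝ} (hc : 0 ≤ c) :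
    (#{h : G → ZMod 2 | c ≤ |corr h S|} : ℝ) * c ^ (2 * q) ≤
      momentBound K q * Fintype.card G ^ q * 2 ^ Fintype.card G := by
  refine (card_filter_mul_pow_le_sum_pow univ (corr · S) hc q).trans
    ((sum_corr_pow_le hS q).trans ?_)
  push_cast [momentBound]
  gcongr

theorem exists_forall_abs_corr_lt_of_lt {K : ℕ} {η : ℝ} (hη : 0 < η)
    (hN : (K + 1) * momentBound K (K + 1) < η ^ (2 * (K + 1)) * Fintype.card G) :
    ∃ h : G → ZMod 2, ∀ S : Finset G, S.Nonempty → #S ≤ K → |corr h S| < η * Fintype.card G := by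
  set q := K + 1
  set C := momentBound K q
  set N := Fintype.card G
  set small := ({S : Finset G | S.Nonempty ∧ #S ≤ K} : Finset _)
  set bad := small.biUnion fun S => ({h : G → ZMod 2 | η * N ≤ |corr h S|} : Finset _)
  suffices hbad : #bad < #(univ : Finset (G → ZMod 2)) by
    obtain ⟨h, -, hh⟩ := exists_mem_notMem_of_card_lt_card hbad
    refine ⟨h, fun S hS hSK => lt_of_not_ge fun hle => hh ?_⟩
    simp only [bad, small, mem_biUnion, mem_filter, mem_univ, true_and]
    exact ⟨S, ⟨hS, hSK⟩, hle⟩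
  have hsmall : small ⊆ ({S : Finset G | #S ≤ K} : Finset _) :=
    monotone_filter_right _ fun _ _ hS => hS.2
  have hpow : 0 < (η * N) ^ (2 * q) := by positivity
  rw [card_univ, Fintype.card_fun, ZMod.card]
  refine Nat.cast_lt (α := ℝ) |>.1 (lt_of_mul_lt_mul_right ?_ hpow.le)
  calc (#bad : ℝ) * (η * N) ^ (2 * q)
      ≤ ∑ S ∈ small, (#{h : G → ZMod 2 | η * N ≤ |corr h S|} : ℝ) * (η * N) ^ (2 * q) := by
        rw [← sum_mul]
        gcongr
        exact_mod_cast card_biUnion_le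
    _ ≤ ∑ _S ∈ small, (C : ℝ) * N ^ q * 2 ^ N := sum_le_sum fun S hS =>
        card_filter_le_abs_corr_mul_pow_le (mem_filter.1 hS).2.1 (mem_filter.1 hS).2.2 q
          (by positivity)
    _ ≤ ((K + 1) * N ^ K) * (C * N ^ q * 2 ^ N) := by
        rw [sum_const, nsmul_eq_mul]
        gcongr
        exact_mod_cast (card_le_card hsmall).trans (card_filter_card_le K)
    _ = ((K + 1) * C) * (N ^ (K + q) * 2 ^ N) := by ring
    _ < (η ^ (2 * q) * N) * (N ^ (K + q) * 2 ^ N) := by gcongr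
    _ = ((2 ^ N : ℕ) : ℝ) * (η * N) ^ (2 * q) := by
        rw [show 2 * q = K + q + 1 by omega]
        push_cast
        ring

end Moments

theorem exists_forall_abs_corr_lt (K : ℕ) {η : ℝ} (hη : 0 < η) :
    ∃ N₀ : ℕ, ∀ (G : Type u) [AddCommGroup G] [Fintype G], N₀ ≤ Fintype.card G →
      ∃ h : G → ZMod 2, ∀ S : Finset G, S.Nonempty → #S ≤ K →
        |corr h S| < η * Fintype.card G := by
  refine ⟨⌈(K + 1) * momentBound K (K + 1) / η ^ (2 * (K + 1))⌉₊ + 1, fun G _ _ hN =>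
    exists_forall_abs_corr_lt_of_lt hη ?_⟩
  have := (Nat.le_ceil _).trans_lt (Nat.cast_lt (α := ℝ).2 (Nat.lt_of_succ_le hN))
  rw [div_lt_iff₀ (by positivity)] at this
  linarith

section Sections

variable {G : Type*} [AddCommGroup G]

noncomputable def bias (h : G → ZMod 2) (U : Finset G) (s : G) : ℝ :=
  ∑ t ∈ U, sgn (h (t - s))

lemma card_filter_sub_eq_zero_eq_half (h : G → ZMod 2) (U : Finset G) (s : G) :
    (#{t ∈ U | h (t - s) = 0} : ℝ) = (#U + bias h U s) / 2 := by
  simp_rw [natCast_card_filter, ite_eq_zero_eq_half, bias, ← sum_div, sum_add_distrib,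
    sum_const, nsmul_one]

end Sections

section Statistics

variable {G : Type*} [AddCommGroup G] [Fintype G]

lemma corr_empty (h : G → ZMod 2) : corr h ∅ = Fintype.card G := by
  simp [corr]

lemma card_filter_forall_sub_eq_zero_eq [DecidableEq G] (h : G → ZMod 2) (X : Finset G) :
    (#{t | ∀ x ∈ X, h (t - x) = 0} : ℝ) = (1 / 2) ^ #X * ∑ S ∈ X.powerset, corr h S := by
  have hind : ∀ t, (if ∀ x ∈ X, h (t - x) = 0 then (1 : ℝ) else 0) =
      (1 / 2) ^ #X * ∑ S ∈ X.powerset, ∏ x ∈ S, sgn (h (t - x)) := fun t => by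
    calc _ = ∏ x ∈ X, (if h (t - x) = 0 then (1 : ℝ) else 0) := by rw [prod_boole]; congr
      _ = _ := by
        simp_rw [ite_eq_zero_eq_half, prod_div_distrib, prod_one_add, prod_const, one_div,
          inv_pow]
        ring
  rw [natCast_card_filter, sum_congr rfl fun t _ => hind t, ← mul_sum, sum_comm]
  rfl

theorem abs_card_filter_forall_div_sub_lt [DecidableEq G] {h : G → ZMod 2} {X : Finset G}
    (hX : X.Nonempty) {η : ℝ} (hcorr : ∀ S ⊆ X, S.Nonempty → |corr h S| < η * Fintype.card G) :
    |(#{t | ∀ x ∈ X, h (t - x) = 0} : ℝ) / Fintype.card G - (1 / 2) ^ #X| < η := by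
  set N : ℝ := (Fintype.card G : ℝ)
  have hN : 0 < N := Nat.cast_pos.2 Fintype.card_pos
  have hη : 0 < η * N := (abs_nonneg _).trans_lt (hcorr X subset_rfl hX)
  have hsum : |∑ S ∈ X.powerset.erase ∅, corr h S| < 2 ^ #X * (η * N) := calc
    _ ≤ ∑ S ∈ X.powerset.erase ∅, |corr h S| := abs_sum_le_sum_abs _ _
    _ < ∑ _S ∈ X.powerset.erase ∅, η * N :=
      sum_lt_sum_of_nonempty ⟨X, mem_erase.2 ⟨hX.ne_empty, mem_powerset_self X⟩⟩
        fun S hS => hcorr S (mem_powerset.1 (mem_of_mem_erase hS))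
          (nonempty_iff_ne_empty.2 (ne_of_mem_erase hS))
    _ ≤ 2 ^ #X * (η * N) := by
      rw [sum_const, nsmul_eq_mul]
      gcongr
      exact_mod_cast (card_erase_le).trans (card_powerset X).le
  rw [card_filter_forall_sub_eq_zero_eq, ← add_sum_erase _ _ (empty_mem_powerset X), corr_empty]
  have hsplit : (1 / 2) ^ #X * (N + ∑ S ∈ X.powerset.erase ∅, corr h S) / N - (1 / 2) ^ #X =
      (1 / 2) ^ #X * (∑ S ∈ X.powerset.erase ∅, corr h S) / N := by
    field_simp
    ring
  rw [hsplit, abs_div, abs_mul, abs_of_pos hN, abs_of_pos (by positivity), div_lt_iff₀ hN]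
  calc (1 / 2) ^ #X * |∑ S ∈ X.powerset.erase ∅, corr h S|
      < (1 / 2) ^ #X * (2 ^ #X * (η * N)) := by gcongr
    _ = η * N := by rw [← mul_assoc, ← mul_pow]; norm_num

lemma sum_bias_sq (h : G → ZMod 2) (U : Finset G) :
    ∑ s, bias h U s ^ 2 = ∑ t ∈ U, ∑ t' ∈ U, ∑ u, sgn (h u) * sgn (h (u - (t - t'))) := by
  simp_rw [bias, sq, sum_mul_sum]
  rw [sum_comm]
  refine sum_congr rfl fun t _ => ?_
  rw [sum_comm]
  refine sum_congr rfl fun t' _ => ?_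
  exact Fintype.sum_equiv (Equiv.subLeft t) _ _ fun s => by simp

lemma sum_bias_sq_le [DecidableEq G] {h : G → ZMod 2} (U : Finset G) {η : ℝ} (hη : 0 ≤ η)
    (hcorr : ∀ d ≠ 0, corr h {0, d} ≤ η * Fintype.card G) :
    ∑ s, bias h U s ^ 2 ≤ #U * (Fintype.card G + #U * (η * Fintype.card G)) := by
  set N : ℝ := (Fintype.card G : ℝ)
  have hinner : ∀ t t' : G, ∑ u, sgn (h u) * sgn (h (u - (t - t'))) ≤
      (if t = t' then N else 0) + η * N := fun t t' => by
    by_cases htt : t = t'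
    · simp only [htt, sub_self, sub_zero, sgn_mul_self, sum_const, card_univ, nsmul_eq_mul,
        mul_one, if_true, le_add_iff_nonneg_right, N]
      positivity
    · have hd : (0 : G) ≠ t - t' := (sub_ne_zero.2 htt).symm
      have := hcorr (t - t') hd.symm
      simp only [corr, prod_pair hd, sub_zero] at this
      simpa [htt] using this
  rw [sum_bias_sq]
  calc _ ≤ ∑ t ∈ U, ∑ t' ∈ U, ((if t = t' then N else 0) + η * N) :=
        sum_le_sum fun t _ => sum_le_sum fun t' _ => hinner t t'
    _ = _ := by
      simp_rw [sum_add_distrib, sum_ite_eq, sum_const, nsmul_eq_mul]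
      rw [sum_ite_of_true fun _ ht => ht, sum_const, nsmul_eq_mul]
      ring

theorem exists_large_set_abs_card_filter_div_sub_lt [DecidableEq G] {h : G → ZMod 2} {η δ : ℝ}
    (hη : 0 ≤ η) (hδ : 0 < δ) (hcorr : ∀ d ≠ 0, corr h {0, d} ≤ η * Fintype.card G)
    (hN : η + 1 / Fintype.card G < δ ^ 3) (U : Finset G) :
    ∃ T : Finset G, (1 - δ) * Fintype.card G < #T ∧ ∀ s ∈ T,
      |(#{t ∈ U | h (t - s) = 0} : ℝ) / Fintype.card G - #U / Fintype.card G / 2| < δ := by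
  set N : ℝ := (Fintype.card G : ℝ)
  have hN0 : 0 < N := Nat.cast_pos.2 Fintype.card_pos
  have hU : (#U : ℝ) ≤ N := Nat.cast_le.2 (card_le_univ U)
  have hbad : (#{s | δ * N ≤ |bias h U s|} : ℝ) < δ * N := by
    have hN' : 1 + η * N < δ ^ 3 * N := by
      have := mul_lt_mul_of_pos_right hN hN0
      rwa [add_mul, one_div, inv_mul_cancel₀ hN0.ne', add_comm] at this
    have key : (#{s | δ * N ≤ |bias h U s|} : ℝ) * (δ * N) ^ 2 < δ * N * (δ * N) ^ 2 := calc
      _ ≤ ∑ s, bias h U s ^ 2 :=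
        card_filter_mul_pow_le_sum_pow univ (bias h U) (by positivity : 0 ≤ δ * N) 1
      _ ≤ #U * (N + #U * (η * N)) := sum_bias_sq_le U hη hcorr
      _ ≤ N * (N + N * (η * N)) := by gcongr
      _ = N ^ 2 * (1 + η * N) := by ring
      _ < N ^ 2 * (δ ^ 3 * N) := by gcongr
      _ = δ * N * (δ * N) ^ 2 := by ring
    exact lt_of_mul_lt_mul_right key (by positivity)
  have hsplit := card_filter_add_card_filter_not (s := univ) (fun s => δ * N ≤ |bias h U s|)
  refine ⟨({s | ¬ δ * N ≤ |bias h U s|} : Finset G), ?_, fun s hs => ?_⟩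
  · have := congrArg (Nat.cast (R := ℝ)) hsplit
    push_cast at this
    rw [card_univ] at this
    linarith
  · have hs := not_le.1 (mem_filter.1 hs).2
    have hdiff : (#U + bias h U s) / 2 / N - #U / N / 2 = bias h U s / (2 * N) := by
      field_simp
      ring
    rw [card_filter_sub_eq_zero_eq_half, hdiff, abs_div,
      abs_of_pos (by positivity : (0 : ℝ) < 2 * N), div_lt_iff₀ (by positivity)]
    linarith [mul_pos hδ hN0]

end Statistics

section Partition

variable {G : Type u} [AddCommGroup G] [Fintype G] [DecidableEq G]

/-- Conditions (1) and (2) of the theorem, with `a = #U / |G|`. -/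
def IsBalancedPartition (k : ℕ) (δ : ℝ) (a0 a1 : Finset G) : Prop :=
  a0 ∪ a1 = univ ∧ Disjoint a0 a1 ∧
    (∀ X : Finset G, X.Nonempty → #X ≤ k →
      |(#{t | ∀ x ∈ X, t ∈ a0.image (· + x)} : ℝ) / Fintype.card G - (1 / 2) ^ #X| < δ) ∧
    ∀ U : Finset G, ∃ T : Finset G, 1 - δ < #T / Fintype.card G ∧ ∀ s ∈ T,
      |(#(a0.image (· + s) ∩ U) : ℝ) / Fintype.card G - #U / Fintype.card G / 2| < δ

theorem isBalancedPartition_of_forall_abs_corr_lt {k : ℕ} {η δ : ℝ} (hη : 0 ≤ η) (hηδ : η ≤ δ)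
    (hδ : 0 < δ) (hN : η + 1 / Fintype.card G < δ ^ 3) {h : G → ZMod 2}
    (hh : ∀ S : Finset G, S.Nonempty → #S ≤ max k 2 → |corr h S| < η * Fintype.card G) :
    IsBalancedPartition k δ {t | h t = 0} {t | ¬h t = 0} := by
  have hmem : ∀ t x : G, t ∈ ({t | h t = 0} : Finset G).image (· + x) ↔ h (t - x) = 0 := by
    simp [Finset.image_add_right, sub_eq_add_neg]
  refine ⟨filter_union_filter_not_eq _ _, disjoint_filter_filter_not _ _ _, fun X hX hXk => ?_,
    fun U => ?_⟩
  · have hset : ({t | ∀ x ∈ X, t ∈ ({t | h t = 0} : Finset G).image (· + x)} : Finset G) =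
        ({t | ∀ x ∈ X, h (t - x) = 0} : Finset G) := by
      ext t
      simp only [mem_filter, hmem]
    rw [hset]
    refine (abs_card_filter_forall_div_sub_lt hX fun S hSX hS => ?_).trans_le hηδ
    exact hh S hS ((card_le_card hSX).trans (hXk.trans (le_max_left _ _)))
  · have hpair : ∀ d ≠ (0 : G), corr h {0, d} ≤ η * Fintype.card G := fun d _ =>
      (le_abs_self _).trans (hh {0, d} (insert_nonempty _ _)
        (card_le_two.trans (le_max_right _ _))).le
    obtain ⟨T, hT, hTs⟩ := exists_large_set_abs_card_filter_div_sub_lt hη hδ hpair hN U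
    refine ⟨T, by rwa [lt_div_iff₀ (Nat.cast_pos.2 Fintype.card_pos)], fun s hs => ?_⟩
    have hset : ({t | h t = 0} : Finset G).image (· + s) ∩ U = {t ∈ U | h (t - s) = 0} := by
      ext t
      simp only [mem_inter, mem_filter, hmem, and_comm]
    rw [hset]
    exact hTs s hs

end Partition

theorem exists_isBalancedPartition (k : ℕ) {δ : ℝ} (hδ : 0 < δ) :
    ∃ N₀ : ℕ, ∀ (G : Type u) [AddCommGroup G] [Fintype G] [DecidableEq G],
      N₀ ≤ Fintype.card G → ∃ a0 a1 : Finset G, IsBalancedPartition k δ a0 a1 := by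
  set η := min δ (δ ^ 3 / 2)
  have hη : 0 < η := lt_min hδ (by positivity)
  obtain ⟨N₀, hN₀⟩ := exists_forall_abs_corr_lt (max k 2) hη
  refine ⟨max N₀ (⌈2 / δ ^ 3⌉₊ + 1), fun G _ _ _ hG => ?_⟩
  obtain ⟨h, hh⟩ := hN₀ G ((le_max_left _ _).trans hG)
  refine ⟨_, _, isBalancedPartition_of_forall_abs_corr_lt hη.le (min_le_left _ _) hδ ?_ hh⟩
  have hN2 : 2 / δ ^ 3 < Fintype.card G := (Nat.le_ceil _).trans_lt <|
    Nat.cast_lt.2 ((Nat.lt_succ_self _).trans_le ((le_max_right _ _).trans hG))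
  rw [div_lt_iff₀ (by positivity)] at hN2
  have : 1 / (Fintype.card G : ℝ) < δ ^ 3 / 2 := by
    rw [div_lt_iff₀ (Nat.cast_pos.2 Fintype.card_pos)]
    linarith
  linarith [min_le_right δ (δ ^ 3 / 2)]

end PseudorandomColoring

open PseudorandomColoring

theorem stmt4 (k : ℕ) (ε δ : ℝ) (hδ : 0 < δ) :
    ∃ n : ℕ, ∀ (I : Type) [Fintype I] [DecidableEq I], n < Fintype.card I →
      ∃ a0 a1 : Finset (I → ZMod 2),
        a0 ∪ a1 = Finset.univ ∧ Disjoint a0 a1 ∧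
        (∀ X : Finset (I → ZMod 2), X.Nonempty → X.card ≤ k →
          |((Finset.univ.filter
              (fun t => ∀ x ∈ X, t ∈ a0.image (· + x))).card : ℝ) / 2 ^ Fintype.card I
            - (1 / 2 : ℝ) ^ X.card| < δ) ∧
        (∀ (U : Finset (I → ZMod 2)) (a : ℝ),
          (U.card : ℝ) / 2 ^ Fintype.card I = a → ε ≤ a →
          ∃ T : Finset (I → ZMod 2), (T.card : ℝ) / 2 ^ Fintype.card I > 1 - δ ∧
            ∀ s ∈ T,
              |(((a0.image (· + s)) ∩ U).card : ℝ) / 2 ^ Fintype.card I - a / 2| < δ) := by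
  obtain ⟨N₀, hN₀⟩ := exists_isBalancedPartition k hδ
  refine ⟨N₀, fun I _ _ hI => ?_⟩
  have hcard : Fintype.card (I → ZMod 2) = 2 ^ Fintype.card I := by simp [ZMod.card]
  obtain ⟨a0, a1, hcover, hdisj, hX, hU⟩ :=
    hN₀ (I → ZMod 2) (hcard ▸ (hI.trans Nat.lt_two_pow_self).le)
  simp only [hcard, Nat.cast_pow, Nat.cast_ofNat] at hX hU
  refine ⟨a0, a1, hcover, hdisj, hX, fun U a hUa _ => ?_⟩
  subst hUa
  exact hU U
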